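/- Let d ≥ 2, let T be the d-regular rooted tree and let Q, P be subgroups of Sym(d) with 1 ≠ Q and Q normal in P. Then G_Q^P is a subgroup of Aut(T), it contains the iterated wreath product W_Q, W_Q is a normal subgroup of G_Q^P, and the index satisfies [G_Q^P : W_Q] = [P : Q]. -/

import Mathlib

open Filter Polynomial

namespace TreePaper

/-- Vertices of the regular rooted tree over alphabet `X`: finite words. -/
abbrev V (X : Type*) := List X

variable {X : Type*}

/-- A permutation of the vertex set fixes the root and preserves adjacency
(sends children of `v` to children of the image of `v`). -/
def IsTreeHom (g : Equiv.Perm (V X)) : Prop :=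
  g [] = [] ∧ ∀ (v : V X) (a : X), ∃ b : X, g (v ++ [a]) = g v ++ [b]

lemma IsTreeHom.mul {g h : Equiv.Perm (V X)} (hg : IsTreeHom g) (hh : IsTreeHom h) :
    IsTreeHom (g * h) := by
  constructor
  · simp only [Equiv.Perm.mul_apply, hh.1, hg.1]
  · intro v a
    obtain ⟨b, hb⟩ := hh.2 v a
    obtain ⟨c, hc⟩ := hg.2 (h v) b
    exact ⟨c, by simp only [Equiv.Perm.mul_apply, hb, hc]⟩

lemma IsTreeHom.one : IsTreeHom (1 : Equiv.Perm (V X)) :=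
  ⟨rfl, fun _ a => ⟨a, rfl⟩⟩

/-- The automorphism group of the regular rooted tree with alphabet `X`,
realized as a subgroup of the permutations of the vertex set. -/
def AutT (X : Type*) : Subgroup (Equiv.Perm (V X)) where
  carrier := {g | IsTreeHom g ∧ IsTreeHom g⁻¹}
  one_mem' := ⟨IsTreeHom.one, by rw [inv_one]; exact IsTreeHom.one⟩
  mul_mem' := by
    intro a b ha hb
    exact ⟨ha.1.mul hb.1, by rw [mul_inv_rev]; exact hb.2.mul ha.2⟩
  inv_mem' := by
    intro a ha
    exact ⟨ha.2, by rw [inv_inv]; exact ha.1⟩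

/-- Restriction of the action of `g` to the `n`-th level of the tree. -/
def res (n : ℕ) (g : Equiv.Perm (V X)) : {v : V X // v.length = n} → V X :=
  fun v => g v.1

/-- `π_n(G)`: the set of actions of elements of `G` on the `n`-th level
(equivalently, on the first `n` levels). -/
def piSet (G : Set (Equiv.Perm (V X))) (n : ℕ) : Set ({v : V X // v.length = n} → V X) :=
  res n '' G

/-- The elements of `π_n(G)` fixing at least one vertex of level `n`. -/
def fixSet (G : Set (Equiv.Perm (V X))) (n : ℕ) :
    Set ({v : V X // v.length = n} → V X) :=
  {f | f ∈ piSet G n ∧ ∃ v : {v : V X // v.length = n}, f v = v.1}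

/-- The sequence `p_n` whose limit is the fixed-point proportion `FPP(G)`. -/
noncomputable def FPPseq (G : Set (Equiv.Perm (V X))) (n : ℕ) : ℝ :=
  ((fixSet G n).ncard : ℝ) / ((piSet G n).ncard : ℝ)

/-- Hausdorff dimension of a subgroup (or subset) of `Aut(T)`. -/
noncomputable def hausdorffDim (G : Set (Equiv.Perm (V X))) : ℝ :=
  Filter.liminf (fun n : ℕ =>
    Real.log ((piSet G n).ncard) /
      Real.log ((piSet (AutT X : Set (Equiv.Perm (V X))) n).ncard)) Filter.atTop

/-- `σ` is the label `g|_v^1` of `g` at the vertex `v`. -/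
def HasLabel (g : Equiv.Perm (V X)) (v : V X) (σ : Equiv.Perm X) : Prop :=
  ∀ a : X, g (v ++ [a]) = g v ++ [σ a]

/-- The (generalized) iterated wreath product `W_S` of a set `S` of permutations:
all tree automorphisms all of whose labels lie in `S`. -/
def WS (S : Set (Equiv.Perm X)) : Set (Equiv.Perm (V X)) :=
  {g | g ∈ AutT X ∧ ∀ v : V X, ∃ σ ∈ S, HasLabel g v σ}

/-- The group `G_Q^P`: tree automorphisms whose labels lie in `P` and any two of
whose labels lie in the same coset of `Q`. -/
def GQP (Q P : Subgroup (Equiv.Perm X)) : Set (Equiv.Perm (V X)) :=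
  {g | g ∈ AutT X ∧ (∀ v : V X, ∃ σ ∈ P, HasLabel g v σ) ∧
    ∀ (v w : V X) (σ τ : Equiv.Perm X), HasLabel g v σ → HasLabel g w τ → σ * τ⁻¹ ∈ Q}

/-- `G` acts transitively on every level of the tree. -/
def LevelTransitive (G : Set (Equiv.Perm (V X))) : Prop :=
  ∀ v w : V X, v.length = w.length → ∃ g ∈ G, g v = w

/-- The section (as a function) of `g` at the vertex `v`. -/
def sectionMap (g : Equiv.Perm (V X)) (v : V X) : V X → V X :=
  fun w => (g (v ++ w)).drop v.length

/-- `G` is self-similar: all sections of elements of `G` belong to `G`. -/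
def SelfSimilar (G : Set (Equiv.Perm (V X))) : Prop :=
  ∀ g ∈ G, ∀ v : V X, ∃ h ∈ G, ∀ w : V X, h w = sectionMap g v w

/-- `K` has finite index in `G` (finitely many left cosets of `K` cover `G`). -/
def FiniteIndexIn (K G : Set (Equiv.Perm (V X))) : Prop :=
  ∃ F : Finset (Equiv.Perm (V X)), ∀ g ∈ G, ∃ t ∈ F, ∃ k ∈ K, g = t * k

/-- The geometric product `K_1`: elements of the first level stabilizer all of whose
first-level sections lie in `K`. -/
def geomProd (K : Set (Equiv.Perm (V X))) : Set (Equiv.Perm (V X)) :=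
  {g | g ∈ AutT X ∧ (∀ a : X, g [a] = [a]) ∧
    ∀ a : X, ∃ h ∈ K, ∀ w : V X, h w = sectionMap g [a] w}

/-- `G` is regular branch over `K`. -/
def RegularBranchOver (G K : Set (Equiv.Perm (V X))) : Prop :=
  LevelTransitive G ∧ K ⊆ G ∧ geomProd K ⊆ K ∧
    FiniteIndexIn (geomProd K) K ∧ FiniteIndexIn K G

/-- `G` is regular branch (over some subgroup). -/
def RegularBranch (G : Set (Equiv.Perm (V X))) : Prop :=
  ∃ K : Set (Equiv.Perm (V X)), RegularBranchOver G K

/-- `G` is closed in `Aut(T)` for the profinite topology. -/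
def IsClosedSub (G : Set (Equiv.Perm (V X))) : Prop :=
  ∀ g ∈ AutT X, (∀ n : ℕ, ∃ h ∈ G, res n h = res n g) → g ∈ G

/-- `D_S(k)`: the number of permutations in `S` fixing exactly `k` points. -/
def DS {d : ℕ} (S : Finset (Equiv.Perm (Fin d))) (k : ℕ) : ℕ :=
  (S.filter fun σ => (Finset.univ.filter fun x => σ x = x).card = k).card

/-- The characteristic polynomial `f_S` of a set of permutations `S`. -/
noncomputable def charPoly {d : ℕ} (S : Finset (Equiv.Perm (Fin d))) : Polynomial ℝ :=
  ∑ k ∈ Finset.Icc 1 d,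
    Polynomial.C ((DS S k : ℝ) / (S.card : ℝ)) * (1 - (1 - Polynomial.X) ^ k)


section Aux

variable {X : Type*}

theorem hasLabel_unique {g : Equiv.Perm (V X)} {v : V X} {σ τ : Equiv.Perm X}
    (h1 : HasLabel g v σ) (h2 : HasLabel g v τ) : σ = τ := by
  ext a
  have h := (h1 a).symm.trans (h2 a)
  have h' := List.append_cancel_left h
  simpa using h'

theorem HasLabel.mul' {g h : Equiv.Perm (V X)} {v : V X} {σ τ : Equiv.Perm X}
    (hh : HasLabel h v τ) (hg : HasLabel g (h v) σ) : HasLabel (g * h) v (σ * τ) := by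
  intro a
  simp only [Equiv.Perm.mul_apply, hh a, hg (τ a)]

theorem HasLabel.inv' {g : Equiv.Perm (V X)} {v : V X} {σ : Equiv.Perm X}
    (hg : HasLabel g (g⁻¹ v) σ) : HasLabel g⁻¹ v σ⁻¹ := by
  intro a
  have h := hg (σ⁻¹ a)
  have e1 : ∀ {Y : Type _} (f : Equiv.Perm Y) (x : Y), f (f⁻¹ x) = x := fun f x => f.apply_symm_apply x
  rw [e1, e1] at h
  calc g⁻¹ (v ++ [a]) = g⁻¹ (g (g⁻¹ v ++ [σ⁻¹ a])) := by rw [h]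
    _ = g⁻¹ v ++ [σ⁻¹ a] := g.symm_apply_apply _

theorem hasLabel_one (v : V X) : HasLabel (1 : Equiv.Perm (V X)) v 1 := fun a => rfl

/-- The automorphism acting letterwise by a fixed permutation. -/
def constPerm (σ : Equiv.Perm X) : Equiv.Perm (V X) where
  toFun := fun l => l.map σ
  invFun := fun l => l.map σ.symm
  left_inv := fun l => by simp [List.map_map, Function.comp_def]
  right_inv := fun l => by simp [List.map_map, Function.comp_def]

theorem constPerm_inv (σ : Equiv.Perm X) : (constPerm σ)⁻¹ = constPerm σ⁻¹ := rfl

theorem constPerm_hasLabel (σ : Equiv.Perm X) (v : V X) : HasLabel (constPerm σ) v σ := by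
  intro a
  simp [constPerm]

theorem constPerm_treeHom (σ : Equiv.Perm X) : IsTreeHom (constPerm σ) :=
  ⟨rfl, fun v a => ⟨σ a, constPerm_hasLabel σ v a⟩⟩

theorem constPerm_mem_autT (σ : Equiv.Perm X) : constPerm σ ∈ AutT X :=
  ⟨constPerm_treeHom σ, by rw [constPerm_inv]; exact constPerm_treeHom σ⁻¹⟩

theorem constPerm_mem_GQP {Q P : Subgroup (Equiv.Perm X)} {σ : Equiv.Perm X} (hσ : σ ∈ P) :
    constPerm σ ∈ GQP Q P := by
  refine ⟨constPerm_mem_autT σ, fun v => ⟨σ, hσ, constPerm_hasLabel σ v⟩, ?_⟩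
  intro v w τ ρ h1 h2
  rw [hasLabel_unique h1 (constPerm_hasLabel σ v), hasLabel_unique h2 (constPerm_hasLabel σ w),
    mul_inv_cancel]
  exact Q.one_mem

/-- `G_Q^P` as a subgroup. -/
def GQPsub (Q P : Subgroup (Equiv.Perm X))
    (hnorm : ∀ p ∈ P, ∀ q ∈ Q, p * q * p⁻¹ ∈ Q) : Subgroup (Equiv.Perm (V X)) where
  carrier := GQP Q P
  one_mem' := by
    have h1 : constPerm (1 : Equiv.Perm X) = 1 := by
      apply Equiv.ext; intro l; simp [constPerm]
    rw [← h1]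
    exact constPerm_mem_GQP P.one_mem
  mul_mem' := by
    rintro a b ⟨haT, haL, haC⟩ ⟨hbT, hbL, hbC⟩
    refine ⟨(AutT X).mul_mem haT hbT, ?_, ?_⟩
    · intro v
      obtain ⟨τ, hτP, hτ⟩ := hbL v
      obtain ⟨σ, hσP, hσ⟩ := haL (b v)
      exact ⟨σ * τ, P.mul_mem hσP hτP, hτ.mul' hσ⟩
    · intro v w ρ₁ ρ₂ h1 h2
      obtain ⟨τv, hτvP, hτv⟩ := hbL v
      obtain ⟨σv, hσvP, hσv⟩ := haL (b v)
      obtain ⟨τw, hτwP, hτw⟩ := hbL w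
      obtain ⟨σw, hσwP, hσw⟩ := haL (b w)
      rw [hasLabel_unique h1 (hτv.mul' hσv), hasLabel_unique h2 (hτw.mul' hσw)]
      have key : σv * τv * (σw * τw)⁻¹ =
          (σv * (τv * τw⁻¹) * σv⁻¹) * (σv * σw⁻¹) := by group
      rw [key]
      exact Q.mul_mem (hnorm σv hσvP _ (hbC v w τv τw hτv hτw)) (haC (b v) (b w) σv σw hσv hσw)
  inv_mem' := by
    rintro g ⟨hgT, hgL, hgC⟩
    refine ⟨(AutT X).inv_mem hgT, ?_, ?_⟩
    · intro v
      obtain ⟨σ, hσP, hσ⟩ := hgL (g⁻¹ v)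
      exact ⟨σ⁻¹, P.inv_mem hσP, hσ.inv'⟩
    · intro v w ρ₁ ρ₂ h1 h2
      obtain ⟨σ, hσP, hσ⟩ := hgL (g⁻¹ v)
      obtain ⟨τ, hτP, hτ⟩ := hgL (g⁻¹ w)
      rw [hasLabel_unique h1 hσ.inv', hasLabel_unique h2 hτ.inv']
      have hq : τ * σ⁻¹ ∈ Q := by
        have := hgC (g⁻¹ w) (g⁻¹ v) τ σ hτ hσ
        exact this
      have key : σ⁻¹ * (τ⁻¹)⁻¹ = σ⁻¹ * (τ * σ⁻¹) * (σ⁻¹)⁻¹ := by group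
      rw [key]
      exact hnorm σ⁻¹ (P.inv_mem hσP) _ hq

/-- `W_Q` as a subgroup. -/
def WSsub (Q : Subgroup (Equiv.Perm X)) : Subgroup (Equiv.Perm (V X)) where
  carrier := WS (Q : Set (Equiv.Perm X))
  one_mem' := ⟨(AutT X).one_mem, fun v => ⟨1, Q.one_mem, hasLabel_one v⟩⟩
  mul_mem' := by
    rintro a b ⟨haT, haL⟩ ⟨hbT, hbL⟩
    refine ⟨(AutT X).mul_mem haT hbT, fun v => ?_⟩
    obtain ⟨τ, hτQ, hτ⟩ := hbL v
    obtain ⟨σ, hσQ, hσ⟩ := haL (b v)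
    exact ⟨σ * τ, Q.mul_mem hσQ hτQ, hτ.mul' hσ⟩
  inv_mem' := by
    rintro g ⟨hgT, hgL⟩
    refine ⟨(AutT X).inv_mem hgT, fun v => ?_⟩
    obtain ⟨σ, hσQ, hσ⟩ := hgL (g⁻¹ v)
    exact ⟨σ⁻¹, Q.inv_mem hσQ, hσ.inv'⟩

variable {Q P : Subgroup (Equiv.Perm X)}
  (hnorm : ∀ p ∈ P, ∀ q ∈ Q, p * q * p⁻¹ ∈ Q)

/-- The root label of an element of `G_Q^P`, as an element of `P`. -/
noncomputable def rootLabel (g : GQPsub Q P hnorm) : P :=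
  ⟨(g.2.2.1 []).choose, (g.2.2.1 []).choose_spec.1⟩

theorem rootLabel_spec (g : GQPsub Q P hnorm) :
    HasLabel (g : Equiv.Perm (V X)) [] (rootLabel hnorm g : Equiv.Perm X) :=
  (g.2.2.1 []).choose_spec.2

theorem rootLabel_eq {g : GQPsub Q P hnorm} {σ : Equiv.Perm X}
    (h : HasLabel (g : Equiv.Perm (V X)) [] σ) : (rootLabel hnorm g : Equiv.Perm X) = σ :=
  hasLabel_unique (rootLabel_spec hnorm g) h

/-- The root-label homomorphism `G_Q^P → P`. -/
noncomputable def rootLabelHom : GQPsub Q P hnorm →* P where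
  toFun := rootLabel hnorm
  map_one' := by
    apply Subtype.ext
    exact rootLabel_eq hnorm (hasLabel_one [])
  map_mul' := by
    intro g h
    apply Subtype.ext
    show (rootLabel hnorm (g * h) : Equiv.Perm X) =
      (rootLabel hnorm g : Equiv.Perm X) * (rootLabel hnorm h : Equiv.Perm X)
    apply rootLabel_eq
    have hroot : (h : Equiv.Perm (V X)) [] = [] := h.2.1.1.1
    have hg2 : HasLabel (g : Equiv.Perm (V X)) ((h : Equiv.Perm (V X)) [])
        (rootLabel hnorm g : Equiv.Perm X) := by
      rw [hroot]; exact rootLabel_spec hnorm g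
    exact (rootLabel_spec hnorm h).mul' hg2

theorem rootLabelHom_surjective : Function.Surjective (rootLabelHom (X := X) hnorm) := by
  intro p
  refine ⟨⟨constPerm (p : Equiv.Perm X), constPerm_mem_GQP p.2⟩, ?_⟩
  apply Subtype.ext
  exact rootLabel_eq hnorm (constPerm_hasLabel _ [])

theorem mem_WS_iff_rootLabel {g : GQPsub Q P hnorm} :
    (g : Equiv.Perm (V X)) ∈ WS (Q : Set (Equiv.Perm X)) ↔
      (rootLabel hnorm g : Equiv.Perm X) ∈ Q := by
  constructor
  · rintro ⟨-, hL⟩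
    obtain ⟨σ, hσQ, hσ⟩ := hL []
    rw [rootLabel_eq hnorm hσ]
    exact hσQ
  · intro hQmem
    refine ⟨g.2.1, fun v => ?_⟩
    obtain ⟨σ, hσP, hσ⟩ := g.2.2.1 v
    refine ⟨σ, ?_, hσ⟩
    have hc : σ * (rootLabel hnorm g : Equiv.Perm X)⁻¹ ∈ Q :=
      g.2.2.2 v [] σ _ hσ (rootLabel_spec hnorm g)
    have : σ = σ * (rootLabel hnorm g : Equiv.Perm X)⁻¹ * (rootLabel hnorm g : Equiv.Perm X) := by
      group
    rw [this]
    exact Q.mul_mem hc hQmem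

end Aux

/-- `G_Q^P` is a subgroup of `Aut(T)` containing `W_Q` as a normal
subgroup of index `[P : Q]`. -/
theorem stmt14 (d : ℕ) (hd : 2 ≤ d) (Q P : Subgroup (Equiv.Perm (Fin d)))
    (hQ : Q ≠ ⊥) (hQP : Q ≤ P) (hnorm : ∀ p ∈ P, ∀ q ∈ Q, p * q * p⁻¹ ∈ Q) :
    ∃ (G' W' : Subgroup (Equiv.Perm (V (Fin d)))),
      (G' : Set (Equiv.Perm (V (Fin d)))) = GQP Q P ∧
      (W' : Set (Equiv.Perm (V (Fin d)))) = WS (Q : Set (Equiv.Perm (Fin d))) ∧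
      G' ≤ AutT (Fin d) ∧
      W' ≤ G' ∧
      (∀ g ∈ G', ∀ w ∈ W', g * w * g⁻¹ ∈ W') ∧
      W'.relIndex G' = Q.relIndex P := by
  classical
  haveI hN : (Q.subgroupOf P).Normal := by
    constructor
    intro n hn p
    rw [Subgroup.mem_subgroupOf] at hn ⊢
    simpa using hnorm p p.2 n hn
  have hWG : WSsub Q ≤ GQPsub Q P hnorm := by
    rintro g ⟨hgT, hgL⟩
    refine ⟨hgT, fun v => ?_, ?_⟩
    · obtain ⟨σ, hσQ, hσ⟩ := hgL v
      exact ⟨σ, hQP hσQ, hσ⟩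
    · intro v w σ τ h1 h2
      obtain ⟨σ', hσ'Q, hσ'⟩ := hgL v
      obtain ⟨τ', hτ'Q, hτ'⟩ := hgL w
      rw [hasLabel_unique h1 hσ', hasLabel_unique h2 hτ']
      exact Q.mul_mem hσ'Q (Q.inv_mem hτ'Q)
  refine ⟨GQPsub Q P hnorm, WSsub Q, rfl, rfl, fun g hg => hg.1, hWG, ?_, ?_⟩
  · -- normality of W' in G'
    intro g hg w hw
    have hwG : w ∈ GQPsub Q P hnorm := hWG hw
    set gG : GQPsub Q P hnorm := ⟨g, hg⟩
    set wG : GQPsub Q P hnorm := ⟨w, hwG⟩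
    have hker : (rootLabel hnorm wG : Equiv.Perm (Fin d)) ∈ Q :=
      (mem_WS_iff_rootLabel hnorm).mp hw
    have hconj : (rootLabel hnorm (gG * wG * gG⁻¹) : Equiv.Perm (Fin d)) ∈ Q := by
      have hmul : rootLabel hnorm (gG * wG * gG⁻¹) =
          rootLabel hnorm gG * rootLabel hnorm wG * (rootLabel hnorm gG)⁻¹ := by
        rw [show rootLabel hnorm = (rootLabelHom hnorm : GQPsub Q P hnorm → P) from rfl,
          ← map_inv (rootLabelHom hnorm), ← map_mul (rootLabelHom hnorm),
          ← map_mul (rootLabelHom hnorm)]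
      rw [hmul]
      push_cast
      exact hnorm _ (rootLabel hnorm gG).2 _ hker
    exact (mem_WS_iff_rootLabel hnorm (g := gG * wG * gG⁻¹)).mpr hconj
  · -- index computation
    set φ : GQPsub Q P hnorm →* P ⧸ Q.subgroupOf P :=
      (QuotientGroup.mk' (Q.subgroupOf P)).comp (rootLabelHom hnorm)
    have hφsurj : Function.Surjective φ :=
      (QuotientGroup.mk'_surjective (Q.subgroupOf P)).comp (rootLabelHom_surjective hnorm)
    have hker : φ.ker = (WSsub Q).subgroupOf (GQPsub Q P hnorm) := by
      ext g
      rw [MonoidHom.mem_ker, Subgroup.mem_subgroupOf]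
      show (QuotientGroup.mk' (Q.subgroupOf P)) (rootLabelHom hnorm g) = 1 ↔ _
      rw [QuotientGroup.mk'_apply, QuotientGroup.eq_one_iff, Subgroup.mem_subgroupOf]
      exact (mem_WS_iff_rootLabel hnorm).symm
    have h1 : (WSsub Q).relIndex (GQPsub Q P hnorm) = φ.ker.index := by
      rw [hker]; rfl
    rw [h1, Subgroup.index_ker]
    have hrange : φ.range = ⊤ := MonoidHom.range_eq_top.mpr hφsurj
    rw [hrange]
    have h2 : Nat.card (⊤ : Subgroup (P ⧸ Q.subgroupOf P)) =
        Nat.card (P ⧸ Q.subgroupOf P) := Nat.card_congr Subgroup.topEquiv.toEquiv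
    rw [h2]
    rfl

end TreePaper
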